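/- arXiv:1602.08177 — 6 statements merged into one kernel-verified Lean document; each statement's English description precedes it below -/
import Mathlib

section
/- Let A be a unital C*-algebra and τ : A → ℂ a faithful positive tracial continuous linear functional. For all positive elements σ, ρ ∈ A, one has τ(|σ^{1/2}ρ^{1/2}|) = τ(|ρ^{1/2}σ^{1/2}|). -/
open scoped ComplexOrder

/-- The absolute value `|x| = (star x * x)^{1/2}` of an element of a C*-algebra,
defined via the continuous functional calculus square root. -/
noncomputable def cstarAbs {A : Type*} [CStarAlgebra A] [PartialOrder A] [StarOrderedRing A]
    (x : A) : A :=
  CFC.sqrt (star x * x)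

/-- The τ-fidelity `F_τ(σ, ρ) = τ(|σ^{1/2} ρ^{1/2}|)`, as a real number. -/
noncomputable def fidelity {A : Type*} [CStarAlgebra A] [PartialOrder A] [StarOrderedRing A]
    (τ : A →L[ℂ] ℂ) (σ ρ : A) : ℝ :=
  (τ (cstarAbs (CFC.sqrt σ * CFC.sqrt ρ))).re

/-!
Since `star (σ^{1/2} ρ^{1/2}) = ρ^{1/2} σ^{1/2}`, it suffices to show `τ (f (x* x)) = τ (f (x x*))`
for `f = √·`. For `f` a polynomial this is the trace property, as `(x* x)^(n+1) = x* (x x*)^n x`.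
A continuous `f` is a uniform limit of polynomials on the (compact) spectra of `x* x` and `x x*`,
and the identity passes to the limit by continuity of the functional calculus and of `τ`.
-/

open Polynomial Filter Topology

theorem map_mul_pow_comm {A M : Type*} [Monoid A] (τ : A → M)
    (htr : ∀ x y : A, τ (x * y) = τ (y * x)) (x y : A) (n : ℕ) :
    τ ((x * y) ^ n) = τ ((y * x) ^ n) := by
  cases n with
  | zero => simp only [pow_zero]
  | succ n => rw [pow_succ', mul_assoc, htr, ← mul_pow_mul, mul_assoc, ← pow_succ]

theorem map_aeval_mul_comm {R A M : Type*} [CommSemiring R] [Semiring A] [Algebra R A]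
    [AddCommMonoid M] [Module R M] (τ : A →ₗ[R] M) (htr : ∀ x y : A, τ (x * y) = τ (y * x))
    (x y : A) (p : R[X]) : τ (aeval (x * y) p) = τ (aeval (y * x) p) := by
  simp only [aeval_eq_sum_range, map_sum, map_smul, map_mul_pow_comm τ htr x y]

theorem exists_tendstoUniformlyOn_eval {s : Set ℝ} (hs : IsCompact s) {f : ℝ → ℝ}
    (hf : ContinuousOn f s) :
    ∃ p : ℕ → ℝ[X], TendstoUniformlyOn (fun n x ↦ (p n).eval x) f atTop s := by
  have : CompactSpace s := isCompact_iff_compactSpace.mp hs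
  have hmem : (⟨s.domRestrict f, hf.domRestrict⟩ : C(s, ℝ)) ∈
      (polynomialFunctions s).topologicalClosure := by
    rw [polynomialFunctions.topologicalClosure]; trivial
  obtain ⟨g, hg, hlim⟩ := mem_closure_iff_seq_limit.mp hmem
  choose p hp using fun n ↦ (hg n : g n ∈ polynomialFunctions s)
  refine ⟨p, ?_⟩
  rw [tendstoUniformlyOn_iff_tendstoUniformly_comp_coe]
  convert ContinuousMap.tendsto_iff_tendstoUniformly.mp hlim using 2 with n x
  · rw [← (hp n).2]; rfl
  · rfl

theorem map_cfc_eq_of_forall_aeval_eq {A E : Type*} [Ring A] [StarRing A] [TopologicalSpace A]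
    [Algebra ℝ A] [ContinuousFunctionalCalculus ℝ A IsSelfAdjoint] [TopologicalSpace E]
    [T2Space E] {τ : A → E} (hτ : Continuous τ) {a b : A} (ha : IsSelfAdjoint a)
    (hb : IsSelfAdjoint b) (h : ∀ p : ℝ[X], τ (aeval a p) = τ (aeval b p)) (f : ℝ → ℝ)
    (hf : ContinuousOn f (spectrum ℝ a ∪ spectrum ℝ b)) : τ (cfc f a) = τ (cfc f b) := by
  obtain ⟨p, hp⟩ := exists_tendstoUniformlyOn_eval
    ((ContinuousFunctionalCalculus.isCompact_spectrum a).union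
      (ContinuousFunctionalCalculus.isCompact_spectrum b)) hf
  have hlim : ∀ c : A, IsSelfAdjoint c → spectrum ℝ c ⊆ spectrum ℝ a ∪ spectrum ℝ b →
      Tendsto (fun n ↦ τ (aeval c (p n))) atTop (𝓝 (τ (cfc f c))) := fun c hc hsub ↦ by
    simp_rw [← cfc_polynomial _ c]
    exact (hτ.tendsto _).comp <| tendsto_cfc_fun (hp.mono hsub)
      (.of_forall fun n ↦ (p n).continuous.continuousOn)
  exact tendsto_nhds_unique (hlim a ha Set.subset_union_left)
    (by simpa only [h] using hlim b hb Set.subset_union_right)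

theorem trace_cfc_star_mul_self {A : Type*} [CStarAlgebra A] (τ : A →L[ℂ] ℂ)
    (htr : ∀ x y : A, τ (x * y) = τ (y * x)) (u : A) (f : ℝ → ℝ)
    (hf : ContinuousOn f (spectrum ℝ (star u * u) ∪ spectrum ℝ (u * star u))) :
    τ (cfc f (star u * u)) = τ (cfc f (u * star u)) :=
  map_cfc_eq_of_forall_aeval_eq τ.continuous (.star_mul_self u) (.mul_star_self u)
    (map_aeval_mul_comm (τ.restrictScalars ℝ : A →ₗ[ℝ] ℂ) htr _ _) f hf

theorem trace_sqrt_star_mul_self {A : Type*} [CStarAlgebra A] [PartialOrder A]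
    [StarOrderedRing A] (τ : A →L[ℂ] ℂ) (htr : ∀ x y : A, τ (x * y) = τ (y * x)) (u : A) :
    τ (CFC.sqrt (star u * u)) = τ (CFC.sqrt (u * star u)) := by
  rw [CFC.sqrt_eq_real_sqrt _ (star_mul_self_nonneg u),
    CFC.sqrt_eq_real_sqrt _ (mul_star_self_nonneg u), cfcₙ_eq_cfc, cfcₙ_eq_cfc]
  exact trace_cfc_star_mul_self τ htr u _ Real.continuous_sqrt.continuousOn

theorem trace_abs_sqrt_mul_sqrt_comm_general
    {A : Type*} [CStarAlgebra A] [PartialOrder A] [StarOrderedRing A]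
    (τ : A →L[ℂ] ℂ)
    (htr : ∀ x y : A, τ (x * y) = τ (y * x))
    (σ ρ : A) :
    τ (cstarAbs (CFC.sqrt σ * CFC.sqrt ρ)) = τ (cstarAbs (CFC.sqrt ρ * CFC.sqrt σ)) := by
  have hstar : star (CFC.sqrt σ * CFC.sqrt ρ) = CFC.sqrt ρ * CFC.sqrt σ := by
    rw [star_mul, (CFC.sqrt_nonneg σ).star_eq, (CFC.sqrt_nonneg ρ).star_eq]
  rw [← hstar, cstarAbs, cstarAbs, star_star]
  exact trace_sqrt_star_mul_self τ htr _

/-- `τ(|σ^{1/2} ρ^{1/2}|) = τ(|ρ^{1/2} σ^{1/2}|)` for positive `σ, ρ`. -/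
theorem trace_abs_sqrt_mul_sqrt_comm
    {A : Type*} [CStarAlgebra A] [PartialOrder A] [StarOrderedRing A]
    (τ : A →L[ℂ] ℂ)
    (htr : ∀ x y : A, τ (x * y) = τ (y * x))
    (hpos : ∀ x : A, 0 ≤ τ (star x * x))
    (hfaith : ∀ x : A, τ (star x * x) = 0 → x = 0)
    (σ ρ : A) (hσ : 0 ≤ σ) (hρ : 0 ≤ ρ) :
    τ (cstarAbs (CFC.sqrt σ * CFC.sqrt ρ)) = τ (cstarAbs (CFC.sqrt ρ * CFC.sqrt σ)) :=
  trace_abs_sqrt_mul_sqrt_comm_general τ htr σ ρ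
end

section
/- Let A be a unital C*-algebra and τ : A → ℂ a faithful positive tracial continuous linear functional. If σ and ρ are τ-states of A, then 0 ≤ F_τ(σ, ρ) ≤ 1, where F_τ(σ, ρ) = τ(|σ^{1/2}ρ^{1/2}|). -/
/-!
With `x = σ^{1/2} ρ^{1/2}` and `c = x* x`, put `m = (c + δ²)^{-1/2}`. Then `u = x m` is a
contraction and `|x| ≤ m c + δ`, while the trace turns `τ (m c) = τ (u* x)` into the inner
product `τ ((u ρ^{1/2})* σ^{1/2})` of the GNS space of `τ`. Cauchy–Schwarz bounds it by
`τ(σ)^{1/2} τ(ρ^{1/2} u* u ρ^{1/2})^{1/2} ≤ τ(σ)^{1/2} τ(ρ)^{1/2} = 1`; finally let `δ → 0`.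
-/

open scoped ComplexOrder

lemma Real.sqrt_le_div_sqrt_add_sq_add {t δ : ℝ} (ht : 0 ≤ t) (hδ : 0 < δ) :
    √t ≤ t / √(t + δ ^ 2) + δ := by
  have hD : 0 < √(t + δ ^ 2) := Real.sqrt_pos.2 (by positivity)
  have hle : √(t + δ ^ 2) ≤ √t + δ := by
    rw [Real.sqrt_le_left (by positivity)]
    nlinarith [Real.sq_sqrt ht, Real.sqrt_nonneg t]
  rw [← sub_le_iff_le_add, le_div_iff₀ hD]
  nlinarith [Real.sq_sqrt ht, Real.sqrt_nonneg t, mul_le_mul_of_nonneg_left hle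
    (Real.sqrt_nonneg t)]

lemma le_of_forall_pos_le_add_mul {a b C : ℝ} (hC : 0 ≤ C) (h : ∀ δ > 0, a ≤ b + δ * C) :
    a ≤ b := by
  refine le_of_forall_pos_le_add fun η hη => (h (η / (C + 1)) (by positivity)).trans ?_
  gcongr
  rw [div_mul_eq_mul_div, div_le_iff₀ (by positivity)]
  nlinarith

lemma exists_sqrt_le_mul_add_and_mul_mul_le_one {A : Type*} [CStarAlgebra A] [PartialOrder A]
    [StarOrderedRing A] {c : A} (hc : 0 ≤ c) {δ : ℝ} (hδ : 0 < δ) :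
    ∃ m : A, IsSelfAdjoint m ∧ CFC.sqrt c ≤ m * c + algebraMap ℝ A δ ∧ m * c * m ≤ 1 := by
  have hpos : ∀ t : ℝ, 0 < |t| + δ ^ 2 := fun t =>
    add_pos_of_nonneg_of_pos (abs_nonneg t) (by positivity)
  -- `|t|` in place of `t` makes `g` continuous on all of `ℝ`; the two agree on the spectrum.
  set g : ℝ → ℝ := fun t => (√(|t| + δ ^ 2))⁻¹
  have hg : Continuous g :=
    (Real.continuous_sqrt.comp (continuous_abs.add continuous_const)).inv₀ fun t =>
      (Real.sqrt_pos.2 (hpos t)).ne'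
  have hmc : cfc (fun t => g t * t) c = cfc g c * c := by
    rw [cfc_mul g (fun t => t) c, cfc_id' ℝ c]
  have hspec : ∀ t ∈ spectrum ℝ c, 0 ≤ t := fun t ht => spectrum_nonneg_of_nonneg hc ht
  refine ⟨cfc g c, cfc_predicate g c, ?_, ?_⟩
  · rw [CFC.sqrt_eq_real_sqrt c, cfcₙ_eq_cfc, ← hmc, ← cfc_add_const _ _ c]
    refine cfc_mono fun t ht => ?_
    have := Real.sqrt_le_div_sqrt_add_sq_add (hspec t ht) hδ
    simpa [g, abs_of_nonneg (hspec t ht), div_eq_inv_mul] using this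
  · rw [← hmc, ← cfc_mul (fun t => g t * t) g c (hg.mul continuous_id).continuousOn
      hg.continuousOn]
    refine cfc_le_one _ c fun t ht => ?_
    calc g t * t * g t = t / (|t| + δ ^ 2) := by
          simp only [g]
          rw [mul_comm, ← mul_assoc, ← mul_inv, Real.mul_self_sqrt (hpos t).le, inv_mul_eq_div]
      _ ≤ 1 :=
        div_le_one_of_le₀ ((le_abs_self t).trans (le_add_of_nonneg_right (sq_nonneg δ))) (hpos t).le

namespace PositiveLinearMap

variable {A : Type*} [CStarAlgebra A] [PartialOrder A] [StarOrderedRing A] (f : A →ₚ[ℂ] ℂ)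

theorem norm_apply_star_mul_le (x y : A) :
    ‖f (star x * y)‖ ≤ √(f (star x * x)).re * √(f (star y * y)).re :=
  norm_inner_le_norm (𝕜 := ℂ) (f.toPreGNS x) (f.toPreGNS y)

theorem re_apply_cstarAbs_mul_le (hf : ∀ x y, f (x * y) = f (y * x)) (a b : A) :
    (f (cstarAbs (a * b))).re ≤ √(f (star a * a)).re * √(f (b * star b)).re := by
  refine le_of_forall_pos_le_add_mul (Complex.re_le_re (f.map_nonneg zero_le_one)) fun δ hδ => ?_
  set x := a * b
  obtain ⟨m, hm, hsqrt, hmcm⟩ :=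
    exists_sqrt_le_mul_add_and_mul_mul_le_one (star_mul_self_nonneg x) hδ
  set v := x * m * star b
  have hvv : star v * v ≤ b * star b := by
    have := star_left_conjugate_le_conjugate hmcm (star b)
    simpa [v, x, hm.star_eq, mul_assoc] using this
  have htrace : f (m * (star x * x)) = f (star v * a) := by
    calc f (m * (star x * x)) = f (m * star b * star a * a * b) := by
          simp only [x, star_mul, mul_assoc]
      _ = f (star v * a) := by
          rw [hf]
          simp only [v, x, star_mul, star_star, hm.star_eq, mul_assoc]
  calc (f (cstarAbs x)).re ≤ (f (m * (star x * x) + algebraMap ℝ A δ)).re :=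
        Complex.re_le_re (OrderHomClass.mono f hsqrt)
    _ = (f (star v * a)).re + δ * (f 1).re := by
        simp [htrace, Algebra.algebraMap_eq_smul_one]
    _ ≤ ‖f (star v * a)‖ + δ * (f 1).re := by gcongr; exact Complex.re_le_norm _
    _ ≤ √(f (star a * a)).re * √(f (b * star b)).re + δ * (f 1).re := by
        gcongr
        rw [mul_comm]
        refine (f.norm_apply_star_mul_le v a).trans ?_
        gcongr

end PositiveLinearMap

theorem fidelity_nonneg_and_le_one_general
    {A : Type*} [CStarAlgebra A] [PartialOrder A] [StarOrderedRing A]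
    (τ : A →L[ℂ] ℂ)
    (htr : ∀ x y : A, τ (x * y) = τ (y * x))
    (hpos : ∀ x : A, 0 ≤ τ (star x * x))
    (σ ρ : A) (hσ : 0 ≤ σ) (hσ1 : τ σ = 1) (hρ : 0 ≤ ρ) (hρ1 : τ ρ = 1) :
    0 ≤ fidelity τ σ ρ ∧ fidelity τ σ ρ ≤ 1 := by
  let f : A →ₚ[ℂ] ℂ := .mk₀ τ.toLinearMap fun a ha => by
    obtain ⟨x, rfl⟩ := CStarAlgebra.nonneg_iff_eq_star_mul_self.mp ha
    exact hpos x
  have hσ' : star (CFC.sqrt σ) * CFC.sqrt σ = σ := by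
    rw [(CFC.sqrt_nonneg σ).isSelfAdjoint.star_eq, CFC.sqrt_mul_sqrt_self σ]
  have hρ' : CFC.sqrt ρ * star (CFC.sqrt ρ) = ρ := by
    rw [(CFC.sqrt_nonneg ρ).isSelfAdjoint.star_eq, CFC.sqrt_mul_sqrt_self ρ]
  refine ⟨Complex.re_le_re (f.map_nonneg (CFC.sqrt_nonneg _)), ?_⟩
  have hfτ : ∀ a, f a = τ a := fun _ => rfl
  calc fidelity τ σ ρ ≤ _ := f.re_apply_cstarAbs_mul_le htr _ _
    _ = 1 := by rw [hσ', hρ', hfτ, hfτ, hσ1, hρ1]; simp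

/-- for τ-states `σ, ρ`, the fidelity satisfies `0 ≤ F_τ(σ, ρ) ≤ 1`. -/
theorem fidelity_nonneg_and_le_one
    {A : Type*} [CStarAlgebra A] [PartialOrder A] [StarOrderedRing A]
    (τ : A →L[ℂ] ℂ)
    (htr : ∀ x y : A, τ (x * y) = τ (y * x))
    (hpos : ∀ x : A, 0 ≤ τ (star x * x))
    (hfaith : ∀ x : A, τ (star x * x) = 0 → x = 0)
    (σ ρ : A) (hσ : 0 ≤ σ) (hσ1 : τ σ = 1) (hρ : 0 ≤ ρ) (hρ1 : τ ρ = 1) :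
    0 ≤ fidelity τ σ ρ ∧ fidelity τ σ ρ ≤ 1 :=
  fidelity_nonneg_and_le_one_general τ htr hpos σ ρ hσ hσ1 hρ hρ1
end

section
/- Let A be a unital C*-algebra and τ : A → ℂ a faithful positive tracial continuous linear functional. If σ and ρ are τ-states of A, then F_τ(σ, ρ) = 0 if and only if σ and ρ are orthogonal, i.e., σρ = ρσ = 0. -/
open scoped ComplexOrder

/-!
A faithful positive functional detects zero among positive elements, and `|x| = 0` iff `x = 0`;
so `F_τ(σ, ρ) = 0` iff `σ^{1/2} ρ^{1/2} = 0`. In a C*-algebra `a * b = 0` follows from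
`a * a * b = 0` for self-adjoint `a` (as `(ab)^* (ab) = b^* (a a b)`), and symmetrically on the
right, which turns `σ ρ = 0` into `σ^{1/2} ρ^{1/2} = 0`. Finally `ρ σ = (σ ρ)^*`.
-/

section CStarRing

variable {E : Type*} [NonUnitalNormedRing E] [StarRing E] [CStarRing E]

lemma IsSelfAdjoint.mul_eq_zero_of_mul_self_mul_eq_zero {a b : E} (ha : IsSelfAdjoint a)
    (h : a * a * b = 0) : a * b = 0 := by
  rw [← CStarRing.star_mul_self_eq_zero_iff, star_mul, ha.star_eq, mul_assoc, ← mul_assoc a, h,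
    mul_zero]

lemma IsSelfAdjoint.mul_eq_zero_of_mul_mul_self_eq_zero {a b : E} (hb : IsSelfAdjoint b)
    (h : a * (b * b) = 0) : a * b = 0 := by
  rw [← CStarRing.mul_star_self_eq_zero_iff, star_mul, hb.star_eq, mul_assoc, ← mul_assoc b,
    ← mul_assoc a, h, zero_mul]

end CStarRing

lemma IsSelfAdjoint.mul_eq_zero_comm {R : Type*} [NonUnitalNonAssocSemiring R] [StarRing R]
    {a b : R} (ha : IsSelfAdjoint a) (hb : IsSelfAdjoint b) : a * b = 0 ↔ b * a = 0 := by
  rw [← star_eq_zero, star_mul, ha.star_eq, hb.star_eq]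

section CStarAlgebra

variable {A : Type*} [CStarAlgebra A] [PartialOrder A] [StarOrderedRing A]

lemma cstarAbs_nonneg (x : A) : 0 ≤ cstarAbs x :=
  CFC.sqrt_nonneg _

lemma cstarAbs_eq_zero_iff (x : A) : cstarAbs x = 0 ↔ x = 0 := by
  rw [cstarAbs, CFC.sqrt_eq_zero_iff _ (star_mul_self_nonneg x),
    CStarRing.star_mul_self_eq_zero_iff]

lemma sqrt_mul_sqrt_eq_zero_iff {a b : A} (ha : 0 ≤ a) (hb : 0 ≤ b) :
    CFC.sqrt a * CFC.sqrt b = 0 ↔ a * b = 0 := by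
  conv_rhs => rw [← CFC.sqrt_mul_sqrt_self a ha, ← CFC.sqrt_mul_sqrt_self b hb]
  refine ⟨fun h => by rw [mul_assoc, ← mul_assoc (CFC.sqrt a) (CFC.sqrt b), h, zero_mul,
    mul_zero], fun h => ?_⟩
  have hsa : ∀ c : A, IsSelfAdjoint (CFC.sqrt c) := fun c => (CFC.sqrt_nonneg c).isSelfAdjoint
  exact (hsa a).mul_eq_zero_of_mul_self_mul_eq_zero
    ((hsa b).mul_eq_zero_of_mul_mul_self_eq_zero h)

lemma re_apply_eq_zero_iff_of_faithful {F : Type*} [FunLike F A ℂ] [ZeroHomClass F A ℂ] (τ : F)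
    (hpos : ∀ x : A, 0 ≤ τ (star x * x))
    (hfaith : ∀ x : A, τ (star x * x) = 0 → x = 0) {a : A} (ha : 0 ≤ a) :
    (τ a).re = 0 ↔ a = 0 := by
  refine ⟨fun h => ?_, fun h => by rw [h, map_zero, Complex.zero_re]⟩
  have ha_eq : star (CFC.sqrt a) * CFC.sqrt a = a := by
    rw [(CFC.sqrt_nonneg a).isSelfAdjoint.star_eq, CFC.sqrt_mul_sqrt_self a ha]
  have hτa : 0 ≤ τ a := by simpa only [ha_eq] using hpos (CFC.sqrt a)
  have hτa0 : τ a = 0 :=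
    Complex.ext (by simpa using h) (by simpa using (Complex.nonneg_iff.mp hτa).2.symm)
  have hsqrt : CFC.sqrt a = 0 := hfaith _ (by rw [ha_eq, hτa0])
  rw [← ha_eq, hsqrt, mul_zero]

end CStarAlgebra

theorem fidelity_eq_zero_iff_orthogonal_general
    {A : Type*} [CStarAlgebra A] [PartialOrder A] [StarOrderedRing A]
    (τ : A →L[ℂ] ℂ)
    (hpos : ∀ x : A, 0 ≤ τ (star x * x))
    (hfaith : ∀ x : A, τ (star x * x) = 0 → x = 0)
    (σ ρ : A) (hσ : 0 ≤ σ) (hρ : 0 ≤ ρ) :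
    fidelity τ σ ρ = 0 ↔ (σ * ρ = 0 ∧ ρ * σ = 0) := by
  rw [fidelity, re_apply_eq_zero_iff_of_faithful τ hpos hfaith (cstarAbs_nonneg _),
    cstarAbs_eq_zero_iff, sqrt_mul_sqrt_eq_zero_iff hσ hρ]
  exact (and_iff_left_of_imp
    (IsSelfAdjoint.mul_eq_zero_comm hσ.isSelfAdjoint hρ.isSelfAdjoint).1).symm

/-- for τ-states `σ, ρ`, `F_τ(σ, ρ) = 0` iff `σ` and `ρ` are orthogonal,
i.e. `σρ = ρσ = 0`. -/
theorem fidelity_eq_zero_iff_orthogonal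
    {A : Type*} [CStarAlgebra A] [PartialOrder A] [StarOrderedRing A]
    (τ : A →L[ℂ] ℂ)
    (htr : ∀ x y : A, τ (x * y) = τ (y * x))
    (hpos : ∀ x : A, 0 ≤ τ (star x * x))
    (hfaith : ∀ x : A, τ (star x * x) = 0 → x = 0)
    (σ ρ : A) (hσ : 0 ≤ σ) (hσ1 : τ σ = 1) (hρ : 0 ≤ ρ) (hρ1 : τ ρ = 1) :
    fidelity τ σ ρ = 0 ↔ (σ * ρ = 0 ∧ ρ * σ = 0) :=
  fidelity_eq_zero_iff_orthogonal_general τ hpos hfaith σ ρ hσ hρ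
end

section
/- Let A be a unital C*-algebra and τ : A → ℂ a faithful positive tracial continuous linear functional. If σ and ρ are τ-states of A, then F_τ(σ, ρ) = 1 if and only if σ = ρ. -/
open scoped ComplexOrder

/-!
Write `a = σ^{1/2}`, `b = ρ^{1/2}` and `‖x‖₂ = τ(x⋆x)^{1/2}` for the GNS seminorm of `τ`.
A C⋆-algebra need not contain the polar decomposition of `ab`, but `u = ab (|ab| + ε)⁻¹` is a
contraction with `|ab| ≤ u⋆ab + ε`. For `w = u⋆a` the trace property gives `τ(u⋆ab) = ⟪b, w⟫`,
hence `‖b - w‖₂² ≤ τ(σ) + τ(ρ) - 2 F_τ(σ, ρ) + 2ε τ(1) = 2ε τ(1)`, and so `w⋆w ≤ σ` while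
`ρ - w⋆w → 0` in `‖·‖₂`. Splitting `σ - ρ = (σ - w⋆w) - (ρ - w⋆w)`, the first summand is
positive with trace `τ(ρ - w⋆w) → 0`, so `τ((σ - ρ)²) = 0` and faithfulness gives `σ = ρ`.
-/

open scoped InnerProductSpace
open Filter Topology

section

variable {A : Type*} [CStarAlgebra A] [PartialOrder A] [StarOrderedRing A]

lemma cstarAbs_of_nonneg {a : A} (ha : 0 ≤ a) : cstarAbs a = a := by
  rw [cstarAbs, (IsSelfAdjoint.of_nonneg ha).star_eq, CFC.sqrt_mul_self a ha]

lemma exists_norm_le_one_cstarAbs_le_star_mul_add (x : A) {ε : ℝ} (hε : 0 < ε) :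
    ∃ u : A, ‖u‖ ≤ 1 ∧ cstarAbs x ≤ star u * x + algebraMap ℝ A ε := by
  set c := cstarAbs x
  have hc : 0 ≤ c := CFC.sqrt_nonneg _
  have hcc : c ^ 2 = star x * x := CFC.sq_sqrt _ (star_mul_self_nonneg x)
  have hspec : ∀ t ∈ spectrum ℝ c, 0 ≤ t := fun t ht => spectrum_nonneg_of_nonneg hc ht
  have hinv : ContinuousOn (fun t : ℝ => (t + ε)⁻¹) (spectrum ℝ c) :=
    ContinuousOn.inv₀ (by fun_prop) fun t ht => by linarith [hspec t ht]
  have hg : ContinuousOn (fun t : ℝ => (t + ε)⁻¹ * t ^ 2) (spectrum ℝ c) := by fun_prop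
  set e := cfc (fun t : ℝ => (t + ε)⁻¹) c
  have he : star e = e := IsSelfAdjoint.star_eq (cfc_predicate _ c)
  have hec : e * c ^ 2 = cfc (fun t : ℝ => (t + ε)⁻¹ * t ^ 2) c := by
    rw [cfc_mul _ _ c hinv, cfc_pow_id c 2 hc.isSelfAdjoint]
  refine ⟨x * e, ?_, ?_⟩
  · have h : star (x * e) * (x * e) = cfc (fun t : ℝ => (t + ε)⁻¹ * t ^ 2 * (t + ε)⁻¹) c := by
      rw [cfc_mul (fun t : ℝ => (t + ε)⁻¹ * t ^ 2) _ c hg hinv, ← hec, hcc, star_mul, he]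
      noncomm_ring
    have hle : star (x * e) * (x * e) ≤ 1 := by
      rw [h]
      refine cfc_le_one _ c fun t ht => ?_
      have := hspec t ht
      rw [show (t + ε)⁻¹ * t ^ 2 * (t + ε)⁻¹ = (t / (t + ε)) ^ 2 by field_simp]
      exact pow_le_one₀ (by positivity) ((div_le_one (by positivity)).mpr (by linarith))
    rw [← CStarAlgebra.norm_le_one_iff_of_nonneg _ (star_mul_self_nonneg _),
      CStarRing.norm_star_mul_self] at hle
    nlinarith [norm_nonneg (x * e)]
  · have h : star (x * e) * x = e * c ^ 2 := by rw [star_mul, he, mul_assoc, hcc]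
    rw [h, hec, ← cfc_add_const ε (fun t : ℝ => (t + ε)⁻¹ * t ^ 2) c hg]
    conv_lhs => rw [← cfc_id' ℝ c]
    refine cfc_mono (fun t ht => ?_) continuousOn_id (hg.add continuousOn_const)
    have := hspec t ht
    rw [show (t + ε)⁻¹ * t ^ 2 + ε = t + ε ^ 2 / (t + ε) by field_simp; ring]
    have : 0 ≤ ε ^ 2 / (t + ε) := by positivity
    linarith

end

namespace PositiveLinearMap

variable {A : Type*} [CStarAlgebra A] [PartialOrder A] [StarOrderedRing A] (f : A →ₚ[ℂ] ℂ)

lemma preGNS_inner_toPreGNS (x y : A) :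
    ⟪f.toPreGNS x, f.toPreGNS y⟫_ℂ = f (star x * y) := rfl

lemma preGNS_norm_toPreGNS_sq (x : A) : ‖f.toPreGNS x‖ ^ 2 = (f (star x * x)).re := by
  rw [← Complex.ofReal_re (‖f.toPreGNS x‖ ^ 2), Complex.ofReal_pow, preGNS_norm_sq]
  rfl

lemma preGNS_norm_mul_le (a x : A) : ‖f.toPreGNS (a * x)‖ ≤ ‖a‖ * ‖f.toPreGNS x‖ :=
  (f.leftMulMapPreGNS a).le_of_opNorm_le
    (LinearMap.mkContinuous_norm_le _ (norm_nonneg a) _) (f.toPreGNS x)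

lemma preGNS_norm_star (htr : ∀ x y, f (x * y) = f (y * x)) (x : A) :
    ‖f.toPreGNS (star x)‖ = ‖f.toPreGNS x‖ := by
  rw [preGNS_norm_def, preGNS_norm_def, ofPreGNS_toPreGNS, ofPreGNS_toPreGNS, star_star, htr]

lemma norm_apply_mul_le_of_nonneg (htr : ∀ x y, f (x * y) = f (y * x)) (s : A) {q : A}
    (hq : 0 ≤ q) : ‖f (s * q)‖ ≤ ‖s‖ * (f q).re := by
  set g := CFC.sqrt q
  have hg : star g = g := (CFC.sqrt_nonneg q).isSelfAdjoint.star_eq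
  have hgg : star g * g = q := by rw [hg, CFC.sqrt_mul_sqrt_self q hq]
  have h : f (s * q) = ⟪f.toPreGNS g, f.toPreGNS (s * g)⟫_ℂ := by
    rw [preGNS_inner_toPreGNS, ← hgg, hg, ← mul_assoc, htr]
  calc ‖f (s * q)‖ ≤ ‖f.toPreGNS g‖ * ‖f.toPreGNS (s * g)‖ := h ▸ norm_inner_le_norm _ _
    _ ≤ ‖f.toPreGNS g‖ * (‖s‖ * ‖f.toPreGNS g‖) :=
      mul_le_mul_of_nonneg_left (f.preGNS_norm_mul_le s g) (norm_nonneg _)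
    _ = ‖s‖ * (f q).re := by rw [← hgg, ← preGNS_norm_toPreGNS_sq]; ring

lemma preGNS_norm_star_mul_self_sub_le (htr : ∀ x y, f (x * y) = f (y * x)) (b w : A) :
    ‖f.toPreGNS (star b * b - star w * w)‖ ≤ (‖b‖ + ‖w‖) * ‖f.toPreGNS (b - w)‖ := by
  have h : star b * b - star w * w = star b * (b - w) + star (star w * (b - w)) := by
    rw [star_mul, star_star, star_sub]; noncomm_ring
  calc ‖f.toPreGNS (star b * b - star w * w)‖
      ≤ ‖f.toPreGNS (star b * (b - w))‖ + ‖f.toPreGNS (star w * (b - w))‖ := by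
        rw [h, map_add, ← f.preGNS_norm_star htr (star w * (b - w))]
        exact norm_add_le _ _
    _ ≤ ‖star b‖ * ‖f.toPreGNS (b - w)‖ + ‖star w‖ * ‖f.toPreGNS (b - w)‖ :=
        add_le_add (f.preGNS_norm_mul_le _ _) (f.preGNS_norm_mul_le _ _)
    _ = (‖b‖ + ‖w‖) * ‖f.toPreGNS (b - w)‖ := by rw [norm_star, norm_star]; ring

theorem eq_of_tendsto_preGNS_norm_sub (htr : ∀ x y, f (x * y) = f (y * x))
    (hfaith : ∀ x, f (star x * x) = 0 → x = 0) {σ ρ : A} (hσρ : f σ = f ρ)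
    {ι : Type*} {l : Filter ι} [l.NeBot] {p : ι → A} (hp : ∀ᶠ i in l, p i ≤ σ)
    (hlim : Tendsto (fun i => ‖f.toPreGNS (ρ - p i)‖) l (𝓝 0)) : σ = ρ := by
  set s := σ - ρ
  set C := ‖s‖ * ‖f.toPreGNS 1‖ + ‖f.toPreGNS s‖
  have hbound : ∀ i, p i ≤ σ → ‖f.toPreGNS s‖ ^ 2 ≤ C * ‖f.toPreGNS (ρ - p i)‖ := by
    intro i hi
    set r := ρ - p i
    have hs : s = (σ - p i) - r := by simp only [s, r]; abel
    have hqr : f (σ - p i) = f r := by simp only [r, map_sub, hσρ]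
    have hq : (f (σ - p i)).re ≤ ‖f.toPreGNS 1‖ * ‖f.toPreGNS r‖ := by
      rw [hqr, ← one_mul r, ← star_one, ← preGNS_inner_toPreGNS, star_one, one_mul]
      exact (Complex.re_le_norm _).trans (norm_inner_le_norm _ _)
    have hsq : ‖f (star s * (σ - p i))‖ ≤ ‖s‖ * (f (σ - p i)).re := by
      simpa only [norm_star] using
        f.norm_apply_mul_le_of_nonneg htr (star s) (sub_nonneg.mpr hi)
    have hsr : ‖f (star s * r)‖ ≤ ‖f.toPreGNS s‖ * ‖f.toPreGNS r‖ :=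
      norm_inner_le_norm (f.toPreGNS s) (f.toPreGNS r)
    calc ‖f.toPreGNS s‖ ^ 2 = (f (star s * (σ - p i))).re - (f (star s * r)).re := by
          rw [preGNS_norm_toPreGNS_sq, ← Complex.sub_re, ← map_sub, ← mul_sub, ← hs]
      _ ≤ ‖f (star s * (σ - p i))‖ + ‖f (star s * r)‖ := by
          linarith [Complex.re_le_norm (f (star s * (σ - p i))),
            Complex.abs_re_le_norm (f (star s * r)), neg_abs_le (f (star s * r)).re]
      _ ≤ C * ‖f.toPreGNS r‖ := by
          have := mul_le_mul_of_nonneg_left hq (norm_nonneg s)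
          simp only [C]; nlinarith
  have hs0 : ‖f.toPreGNS s‖ ^ 2 ≤ 0 :=
    ge_of_tendsto (by simpa using hlim.const_mul C) (hp.mono hbound)
  have hfs : f (star s * s) = 0 := by
    have h := f.preGNS_norm_sq (f.toPreGNS s)
    rw [ofPreGNS_toPreGNS] at h
    rw [← h]
    exact_mod_cast le_antisymm hs0 (sq_nonneg _)
  exact sub_eq_zero.mp (hfaith s hfs)

lemma exists_preGNS_norm_sub_sq_le (htr : ∀ x y, f (x * y) = f (y * x)) (a : A) {b : A}
    (hb : IsSelfAdjoint b) {ε : ℝ} (hε : 0 < ε) :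
    ∃ w : A, ‖w‖ ≤ ‖a‖ ∧ star w * w ≤ star a * a ∧
      ‖f.toPreGNS (b - w)‖ ^ 2 ≤ (f (star a * a)).re + (f (star b * b)).re
        - 2 * ((f (cstarAbs (a * b))).re - ε * (f 1).re) := by
  obtain ⟨u, hu, habs⟩ := exists_norm_le_one_cstarAbs_le_star_mul_add (a * b) hε
  have huu : u * star u ≤ 1 := by
    rw [← CStarAlgebra.norm_le_one_iff_of_nonneg _ (mul_star_self_nonneg u),
      CStarRing.norm_self_mul_star]
    exact mul_le_one₀ hu (norm_nonneg u) hu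
  set w := star u * a
  have hw_norm : ‖w‖ ≤ ‖a‖ :=
    calc ‖w‖ ≤ ‖star u‖ * ‖a‖ := norm_mul_le _ _
      _ ≤ ‖a‖ := by rw [norm_star]; exact mul_le_of_le_one_left (norm_nonneg a) hu
  have hw_le : star w * w ≤ star a * a := by
    simpa only [w, star_mul, star_star, mul_assoc, mul_one] using
      star_left_conjugate_le_conjugate huu a
  have hinner : f (star u * (a * b)) = ⟪f.toPreGNS b, f.toPreGNS w⟫_ℂ := by
    rw [preGNS_inner_toPreGNS, hb.star_eq, ← mul_assoc, htr]
  have hre : (f (cstarAbs (a * b))).re - ε * (f 1).re ≤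
      RCLike.re ⟪f.toPreGNS b, f.toPreGNS w⟫_ℂ := by
    have := Complex.re_le_re (OrderHomClass.mono f habs)
    rw [map_add, Algebra.algebraMap_eq_smul_one, f.map_smul_of_tower, Complex.add_re,
      Complex.smul_re, smul_eq_mul, hinner] at this
    simpa using this
  have hw2 : ‖f.toPreGNS w‖ ^ 2 ≤ (f (star a * a)).re := by
    rw [preGNS_norm_toPreGNS_sq]
    exact Complex.re_le_re (OrderHomClass.mono f hw_le)
  refine ⟨w, hw_norm, hw_le, ?_⟩
  rw [map_sub, norm_sub_sq (𝕜 := ℂ), preGNS_norm_toPreGNS_sq]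
  linarith

lemma exists_tendsto_preGNS_norm_sub_of_fidelity_eq_one (htr : ∀ x y, f (x * y) = f (y * x))
    {σ ρ : A} (hσ : 0 ≤ σ) (hσ1 : f σ = 1) (hρ : 0 ≤ ρ) (hρ1 : f ρ = 1)
    (hF : (f (cstarAbs (CFC.sqrt σ * CFC.sqrt ρ))).re = 1) :
    ∃ p : ℝ → A, (∀ᶠ ε in 𝓝[>] 0, p ε ≤ σ) ∧
      Tendsto (fun ε => ‖f.toPreGNS (ρ - p ε)‖) (𝓝[>] 0) (𝓝 0) := by
  set a := CFC.sqrt σ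
  set b := CFC.sqrt ρ
  have haa : star a * a = σ := by
    rw [(CFC.sqrt_nonneg σ).isSelfAdjoint.star_eq, CFC.sqrt_mul_sqrt_self σ hσ]
  have hbb : star b * b = ρ := by
    rw [(CFC.sqrt_nonneg ρ).isSelfAdjoint.star_eq, CFC.sqrt_mul_sqrt_self ρ hρ]
  choose! w hw_norm hw_le hw_dist using fun ε (hε : 0 < ε) =>
    f.exists_preGNS_norm_sub_sq_le htr a (CFC.sqrt_nonneg ρ).isSelfAdjoint hε
  refine ⟨fun ε => star (w ε) * w ε, ?_, ?_⟩
  · filter_upwards [self_mem_nhdsWithin] with ε hε using haa ▸ hw_le ε hε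
  set M := (f 1).re
  have hbound : ∀ ε > 0,
      ‖f.toPreGNS (ρ - star (w ε) * w ε)‖ ≤ (‖b‖ + ‖a‖) * √(2 * M * ε) := by
    intro ε hε
    have hd : ‖f.toPreGNS (b - w ε)‖ ≤ √(2 * M * ε) := by
      have := hw_dist ε hε
      rw [haa, hbb, hσ1, hρ1, hF, Complex.one_re] at this
      exact Real.le_sqrt_of_sq_le (by linarith)
    calc ‖f.toPreGNS (ρ - star (w ε) * w ε)‖
        ≤ (‖b‖ + ‖w ε‖) * ‖f.toPreGNS (b - w ε)‖ :=
          hbb ▸ f.preGNS_norm_star_mul_self_sub_le htr b (w ε)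
      _ ≤ (‖b‖ + ‖a‖) * √(2 * M * ε) := by gcongr; exact hw_norm ε hε
  refine squeeze_zero' (.of_forall fun _ => norm_nonneg _)
    (eventually_nhdsWithin_of_forall hbound) ?_
  have hcont : Continuous fun ε : ℝ => (‖b‖ + ‖a‖) * √(2 * M * ε) := by fun_prop
  simpa using (hcont.tendsto 0).mono_left nhdsWithin_le_nhds

end PositiveLinearMap

/-- for τ-states `σ, ρ`, `F_τ(σ, ρ) = 1` iff `σ = ρ`. -/
theorem fidelity_eq_one_iff_eq
    {A : Type*} [CStarAlgebra A] [PartialOrder A] [StarOrderedRing A]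
    (τ : A →L[ℂ] ℂ)
    (htr : ∀ x y : A, τ (x * y) = τ (y * x))
    (hpos : ∀ x : A, 0 ≤ τ (star x * x))
    (hfaith : ∀ x : A, τ (star x * x) = 0 → x = 0)
    (σ ρ : A) (hσ : 0 ≤ σ) (hσ1 : τ σ = 1) (hρ : 0 ≤ ρ) (hρ1 : τ ρ = 1) :
    fidelity τ σ ρ = 1 ↔ σ = ρ := by
  let f : A →ₚ[ℂ] ℂ := .mk₀ τ.toLinearMap fun x hx => by
    obtain ⟨y, rfl⟩ := CStarAlgebra.nonneg_iff_eq_star_mul_self.mp hx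
    exact hpos y
  constructor
  · intro hF
    obtain ⟨p, hp, hlim⟩ :=
      f.exists_tendsto_preGNS_norm_sub_of_fidelity_eq_one htr hσ hσ1 hρ hρ1 hF
    exact f.eq_of_tendsto_preGNS_norm_sub htr hfaith (hσ1.trans hρ1.symm) hp hlim
  · rintro rfl
    rw [fidelity, CFC.sqrt_mul_sqrt_self σ hσ, cstarAbs_of_nonneg hσ, hσ1, Complex.one_re]
end

section
/- Let A be a unital C*-algebra and τ : A → ℂ a faithful positive tracial continuous linear functional. If a positive linear map E : A → A preserves τ-fidelity (that is, τ ∘ E = τ and F_τ(E(σ), E(ρ)) = F_τ(σ, ρ) for all τ-states σ, ρ), then E is injective. -/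
open scoped ComplexOrder

/-!
A positive map is `⋆`-preserving, so its kernel is spanned by self-adjoint elements, and it
suffices to treat a self-adjoint `a` with `E a = 0`. Then `E a⁺ = E a⁻` while `a⁺ a⁻ = 0`, and
`τ a⁺ = τ a⁻ =: t ≥ 0` since `τ ∘ E = τ`. If `t = 0`, faithfulness gives `a⁺ = a⁻ = 0`. Otherwise
`a⁺ / t` and `a⁻ / t` are orthogonal τ-states, so their fidelity is `0`, whereas their images
coincide and so have fidelity `τ(E(a⁺ / t)) = 1`.
-/

open ComplexStarModule

section StarPreserving

variable {A B : Type*} [NonUnitalCStarAlgebra A] [PartialOrder A] [StarOrderedRing A]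
  [NonUnitalCStarAlgebra B] [PartialOrder B] [StarOrderedRing B]

lemma IsSelfAdjoint.map_of_map_nonneg {E : A →ₗ[ℂ] B} (hE : ∀ x, 0 ≤ x → 0 ≤ E x)
    {a : A} (ha : IsSelfAdjoint a) : IsSelfAdjoint (E a) := by
  rw [← CFC.posPart_sub_negPart a ha, map_sub]
  exact (hE _ (CFC.posPart_nonneg a)).isSelfAdjoint.sub
    (hE _ (CFC.negPart_nonneg a)).isSelfAdjoint

lemma map_star_of_map_nonneg {E : A →ₗ[ℂ] B} (hE : ∀ x, 0 ≤ x → 0 ≤ E x) (x : A) :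
    E (star x) = star (E x) := by
  have hre := (ℜ x).2.map_of_map_nonneg hE
  have him := (ℑ x).2.map_of_map_nonneg hE
  conv_lhs => rw [← realPart_add_I_smul_imaginaryPart x]
  conv_rhs => rw [← realPart_add_I_smul_imaginaryPart x]
  simp only [star_add, star_smul, map_add, map_smul, (ℜ x).2.star_eq, (ℑ x).2.star_eq,
    hre.star_eq, him.star_eq, Complex.star_def, Complex.conj_I]

end StarPreserving

lemma LinearMap.injective_of_map_star {A B : Type*} [AddCommGroup A] [Module ℂ A]
    [StarAddMonoid A] [StarModule ℂ A] [AddCommGroup B] [Module ℂ B] [StarAddMonoid B]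
    {E : A →ₗ[ℂ] B}
    (hstar : ∀ x, E (star x) = star (E x))
    (hsa : ∀ a : A, IsSelfAdjoint a → E a = 0 → a = 0) : Function.Injective E := by
  refine (injective_iff_map_eq_zero E).mpr fun x hx => ?_
  have hxs : E (star x) = 0 := by rw [hstar, hx, star_zero]
  have hre : (ℜ x : A) = 0 :=
    hsa _ (ℜ x).2 (by
      simp only [realPart_apply_coe, map_smul_of_tower, map_add, hx, hxs, add_zero, smul_zero])
  have him : (ℑ x : A) = 0 :=
    hsa _ (ℑ x).2 (by
      simp only [imaginaryPart_apply_coe, map_smul, map_smul_of_tower, map_sub, hx, hxs, sub_zero,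
        smul_zero])
  rw [← realPart_add_I_smul_imaginaryPart x, hre, him, smul_zero, add_zero]

section Orthogonal

variable {A : Type*} [NonUnitalCStarAlgebra A] [PartialOrder A] [StarOrderedRing A]

lemma IsSelfAdjoint.mul_sqrt_eq_zero {x q : A} (hx : IsSelfAdjoint x) (hq : 0 ≤ q)
    (h : x * q = 0) : x * CFC.sqrt q = 0 := by
  rw [← CStarRing.mul_star_self_eq_zero_iff, star_mul, (CFC.sqrt_nonneg q).star_eq, hx.star_eq]
  calc x * CFC.sqrt q * (CFC.sqrt q * x) = x * (CFC.sqrt q * CFC.sqrt q) * x := by noncomm_ring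
    _ = 0 := by rw [CFC.sqrt_mul_sqrt_self q hq, h, zero_mul]

lemma CFC.sqrt_mul_sqrt_eq_zero {p q : A} (hp : 0 ≤ p) (hq : 0 ≤ q) (h : p * q = 0) :
    CFC.sqrt p * CFC.sqrt q = 0 := by
  have hpq : p * CFC.sqrt q = 0 := hp.isSelfAdjoint.mul_sqrt_eq_zero hq h
  have hqp : CFC.sqrt q * p = 0 := by
    simpa only [star_mul, hp.star_eq, (CFC.sqrt_nonneg q).star_eq, star_zero]
      using congrArg star hpq
  have := (CFC.sqrt_nonneg q).isSelfAdjoint.mul_sqrt_eq_zero hp hqp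
  simpa only [star_mul, (CFC.sqrt_nonneg p).star_eq, (CFC.sqrt_nonneg q).star_eq, star_zero]
    using congrArg star this

end Orthogonal

section Fidelity

variable {A : Type*} [CStarAlgebra A] [PartialOrder A] [StarOrderedRing A]

lemma cstarAbs_of_nonneg_s9 {x : A} (hx : 0 ≤ x) : cstarAbs x = x := by
  rw [cstarAbs, hx.star_eq, CFC.sqrt_mul_self x hx]

lemma fidelity_self (τ : A →L[ℂ] ℂ) {x : A} (hx : 0 ≤ x) : fidelity τ x x = (τ x).re := by
  rw [fidelity, CFC.sqrt_mul_sqrt_self x hx, cstarAbs_of_nonneg_s9 hx]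

lemma fidelity_eq_zero_of_mul_eq_zero (τ : A →L[ℂ] ℂ) {σ ρ : A} (hσ : 0 ≤ σ) (hρ : 0 ≤ ρ)
    (h : σ * ρ = 0) : fidelity τ σ ρ = 0 := by
  rw [fidelity, CFC.sqrt_mul_sqrt_eq_zero hσ hρ h, cstarAbs, star_zero, zero_mul, CFC.sqrt_zero,
    map_zero, Complex.zero_re]

end Fidelity

namespace ContinuousLinearMap

variable {A : Type*} [CStarAlgebra A] [PartialOrder A] [StarOrderedRing A] (τ : A →L[ℂ] ℂ)

lemma apply_nonneg_of_nonneg (hpos : ∀ x : A, 0 ≤ τ (star x * x)) {x : A} (hx : 0 ≤ x) :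
    0 ≤ τ x := by
  obtain ⟨b, rfl⟩ := CStarAlgebra.nonneg_iff_eq_star_mul_self.mp hx
  exact hpos b

lemma eq_zero_of_nonneg_of_apply_eq_zero (hfaith : ∀ x : A, τ (star x * x) = 0 → x = 0) {x : A}
    (hx : 0 ≤ x) (h : τ x = 0) : x = 0 := by
  obtain ⟨b, rfl⟩ := CStarAlgebra.nonneg_iff_eq_star_mul_self.mp hx
  rw [hfaith b h, mul_zero]

end ContinuousLinearMap

section FidelityPreserving

variable {A : Type*} [CStarAlgebra A] [PartialOrder A] [StarOrderedRing A] {τ : A →L[ℂ] ℂ}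
  {E : A →ₗ[ℂ] A}

lemma eq_zero_of_map_eq_map_of_mul_eq_zero (hpos : ∀ x : A, 0 ≤ τ (star x * x))
    (hfaith : ∀ x : A, τ (star x * x) = 0 → x = 0) (hE : ∀ x : A, 0 ≤ x → 0 ≤ E x)
    (hEτ : ∀ x : A, τ (E x) = τ x)
    (hEfid : ∀ σ ρ : A, 0 ≤ σ → τ σ = 1 → 0 ≤ ρ → τ ρ = 1 →
      fidelity τ (E σ) (E ρ) = fidelity τ σ ρ)
    {p q : A} (hp : 0 ≤ p) (hq : 0 ≤ q) (hpq : p * q = 0) (hEpq : E p = E q) : p = 0 := by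
  set t := (τ p).re
  have hτp_nonneg := τ.apply_nonneg_of_nonneg hpos hp
  have hτp : τ p = t := Complex.eq_re_of_ofReal_le hτp_nonneg
  have hτq : τ q = t := by rw [← hEτ, ← hEpq, hEτ, hτp]
  have ht : 0 ≤ t := Complex.zero_le_real.mp (hτp ▸ hτp_nonneg)
  rcases ht.eq_or_lt with ht0 | htpos
  · exact τ.eq_zero_of_nonneg_of_apply_eq_zero hfaith hp (by rw [hτp, ← ht0, Complex.ofReal_zero])
  exfalso
  have hnormalize : ∀ x : A, τ x = t → τ (t⁻¹ • x) = 1 := fun x hx => by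
    rw [τ.map_smul_of_tower, hx, Complex.real_smul, ← Complex.ofReal_mul, inv_mul_cancel₀ htpos.ne',
      Complex.ofReal_one]
  have hσ : 0 ≤ t⁻¹ • p := smul_nonneg (inv_nonneg.mpr ht) hp
  have hρ : 0 ≤ t⁻¹ • q := smul_nonneg (inv_nonneg.mpr ht) hq
  have horth : fidelity τ (t⁻¹ • p) (t⁻¹ • q) = 0 :=
    fidelity_eq_zero_of_mul_eq_zero τ hσ hρ (by rw [smul_mul_smul_comm, hpq, smul_zero])
  have hone : fidelity τ (E (t⁻¹ • p)) (E (t⁻¹ • q)) = 1 := by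
    rw [E.map_smul_of_tower, E.map_smul_of_tower, ← hEpq, ← E.map_smul_of_tower,
      fidelity_self τ (hE _ hσ), hEτ, hnormalize p hτp, Complex.one_re]
  rw [hEfid _ _ hσ (hnormalize p hτp) hρ (hnormalize q hτq), horth] at hone
  exact zero_ne_one hone

end FidelityPreserving

theorem injective_of_preserves_fidelity_general
    {A : Type*} [CStarAlgebra A] [PartialOrder A] [StarOrderedRing A]
    (τ : A →L[ℂ] ℂ)
    (hpos : ∀ x : A, 0 ≤ τ (star x * x))
    (hfaith : ∀ x : A, τ (star x * x) = 0 → x = 0)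
    (E : A →ₗ[ℂ] A)
    (hE : ∀ x : A, 0 ≤ x → 0 ≤ E x)
    (hEτ : ∀ x : A, τ (E x) = τ x)
    (hEfid : ∀ σ ρ : A, 0 ≤ σ → τ σ = 1 → 0 ≤ ρ → τ ρ = 1 →
      fidelity τ (E σ) (E ρ) = fidelity τ σ ρ) :
    Function.Injective E := by
  refine E.injective_of_map_star (map_star_of_map_nonneg hE) fun a ha hEa => ?_
  have hEparts : E a⁺ = E a⁻ := by
    rw [← sub_eq_zero, ← map_sub, CFC.posPart_sub_negPart a ha, hEa]
  have key {p q : A} :=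
    eq_zero_of_map_eq_map_of_mul_eq_zero (p := p) (q := q) hpos hfaith hE hEτ hEfid
  have hpos_part : a⁺ = 0 :=
    key (CFC.posPart_nonneg a) (CFC.negPart_nonneg a) (CFC.posPart_mul_negPart a) hEparts
  have hneg_part : a⁻ = 0 :=
    key (CFC.negPart_nonneg a) (CFC.posPart_nonneg a) (CFC.negPart_mul_posPart a) hEparts.symm
  rw [← CFC.posPart_sub_negPart a ha, hpos_part, hneg_part, sub_zero]

/-- a positive linear map preserving τ-fidelity is injective. -/
theorem injective_of_preserves_fidelity
    {A : Type*} [CStarAlgebra A] [PartialOrder A] [StarOrderedRing A]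
    (τ : A →L[ℂ] ℂ)
    (htr : ∀ x y : A, τ (x * y) = τ (y * x))
    (hpos : ∀ x : A, 0 ≤ τ (star x * x))
    (hfaith : ∀ x : A, τ (star x * x) = 0 → x = 0)
    (E : A →ₗ[ℂ] A)
    (hE : ∀ x : A, 0 ≤ x → 0 ≤ E x)
    (hEτ : ∀ x : A, τ (E x) = τ x)
    (hEfid : ∀ σ ρ : A, 0 ≤ σ → τ σ = 1 → 0 ≤ ρ → τ ρ = 1 →
      fidelity τ (E σ) (E ρ) = fidelity τ σ ρ) :
    Function.Injective E :=
  injective_of_preserves_fidelity_general τ hpos hfaith E hE hEτ hEfid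
end

section
/- Let d ∈ ℕ, d ≥ 1. For all positive semidefinite d×d complex matrices A and B, tr(|A^{1/2}B^{1/2}|) ≤ √(tr(A)·tr(B)). -/
open scoped ComplexOrder
open Matrix

open scoped Classical in
/-- The positive semidefinite square root of a positive semidefinite matrix
(junk value `0` if the matrix is not positive semidefinite). -/
noncomputable def matSqrt {d : ℕ} (M : Matrix (Fin d) (Fin d) ℂ) : Matrix (Fin d) (Fin d) ℂ :=
  if h : M.PosSemidef then
    (h.1.eigenvectorUnitary : Matrix (Fin d) (Fin d) ℂ) *
      diagonal (fun i => ((Real.sqrt (h.1.eigenvalues i) : ℝ) : ℂ)) *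
      (star h.1.eigenvectorUnitary : Matrix (Fin d) (Fin d) ℂ)
  else 0

/-- The absolute value `|X| = (Xᴴ X)^{1/2}` of a matrix. -/
noncomputable def matAbs {d : ℕ} (X : Matrix (Fin d) (Fin d) ℂ) : Matrix (Fin d) (Fin d) ℂ :=
  matSqrt (Xᴴ * X)

/-- The fidelity `F(σ, ρ) = tr |σ^{1/2} ρ^{1/2}|` of two matrices, as a real number. -/
noncomputable def matFid {d : ℕ} (σ ρ : Matrix (Fin d) (Fin d) ℂ) : ℝ :=
  ((matAbs (matSqrt σ * matSqrt ρ)).trace).re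

/-!
Polar decomposition gives a partial isometry `W` with `W X = |X|`; for `X = A^{1/2} B^{1/2}` this
turns `tr |X|` into the Hilbert–Schmidt inner product of `(W A^{1/2})ᴴ` and `B^{1/2}`. Cauchy–Schwarz
bounds it by `√(tr (W A Wᴴ) · tr B)`, and `tr (W A Wᴴ) ≤ tr A` because `Wᴴ W` is a projection.
-/

namespace Matrix

variable {n 𝕜 : Type*} [Fintype n] [DecidableEq n] [RCLike 𝕜]

lemma re_trace_mul_conjTranspose_sq_le (Y Z : Matrix n n 𝕜) :
    RCLike.re (Z * Yᴴ).trace ^ 2 ≤ RCLike.re (Y * Yᴴ).trace * RCLike.re (Z * Zᴴ).trace := by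
  let := toMatrixSeminormedAddCommGroup (1 : Matrix n n 𝕜) PosSemidef.one
  let := toMatrixInnerProductSpace (1 : Matrix n n 𝕜) PosSemidef.one
  have inner_eq (A B : Matrix n n 𝕜) : inner 𝕜 A B = (B * Aᴴ).trace := by
    change (B * 1 * Aᴴ).trace = _
    rw [mul_one]
  have h := (RCLike.abs_re_le_norm _).trans (norm_inner_le_norm (𝕜 := 𝕜) Y Z)
  rw [inner_eq] at h
  rw [← inner_eq Y Y, ← inner_eq Z Z, ← norm_sq_eq_re_inner, ← norm_sq_eq_re_inner, ← mul_pow,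
    ← sq_abs]
  exact pow_le_pow_left₀ (abs_nonneg _) h 2

lemma PosSemidef.re_trace_mul_mul_conjTranspose_le {M W : Matrix n n 𝕜} (hM : M.PosSemidef)
    (hW : W * Wᴴ * W = W) :
    RCLike.re (W * M * Wᴴ).trace ≤ RCLike.re M.trace := by
  set R := 1 - Wᴴ * W
  have hR : Rᴴ = R := by simp [R, conjTranspose_sub]
  have hRR : R * R = R := by
    have : Wᴴ * W * (Wᴴ * W) = Wᴴ * W := by rw [Matrix.mul_assoc, ← Matrix.mul_assoc W, hW]
    simp only [R, sub_mul, mul_sub, one_mul, mul_one, this, sub_self, sub_zero]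
  have key : (R * M * Rᴴ).trace = M.trace - (W * M * Wᴴ).trace := by
    rw [hR, trace_mul_cycle R M R, hRR, trace_mul_cycle W M Wᴴ]
    simp [R, trace_sub, sub_mul]
  have := (RCLike.nonneg_iff.mp (hM.mul_mul_conjTranspose_same R).trace_nonneg).1
  rw [key, map_sub] at this
  linarith

end Matrix

section

variable {d : ℕ}

lemma matSqrt_eq_cfc {M : Matrix (Fin d) (Fin d) ℂ} (hM : M.PosSemidef) :
    matSqrt M = cfc Real.sqrt M := by
  rw [hM.1.cfc_eq, matSqrt, dif_pos hM]
  rfl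

lemma isHermitian_matSqrt (M : Matrix (Fin d) (Fin d) ℂ) : (matSqrt M).IsHermitian := by
  by_cases hM : M.PosSemidef
  · rw [matSqrt_eq_cfc hM]
    exact IsSelfAdjoint.cfc
  · rw [matSqrt, dif_neg hM]
    exact isHermitian_zero

lemma matSqrt_mul_self {M : Matrix (Fin d) (Fin d) ℂ} (hM : M.PosSemidef) :
    matSqrt M * matSqrt M = M := by
  have hspec : ∀ x ∈ spectrum ℝ M, 0 ≤ x := by
    rw [hM.1.spectrum_real_eq_range_eigenvalues]
    rintro _ ⟨i, rfl⟩
    exact hM.eigenvalues_nonneg i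
  rw [matSqrt_eq_cfc hM, ← cfc_mul .., cfc_congr fun x hx => Real.mul_self_sqrt (hspec x hx),
    cfc_id' ℝ M hM.1.isSelfAdjoint]

lemma exists_partialIsometry_mul_eq_matAbs (X : Matrix (Fin d) (Fin d) ℂ) :
    ∃ W : Matrix (Fin d) (Fin d) ℂ, W * Wᴴ * W = W ∧ W * X = matAbs X := by
  set H := Xᴴ * X
  have hHpsd : H.PosSemidef := posSemidef_conjTranspose_mul_self X
  have hc (f : ℝ → ℝ) : ContinuousOn f (spectrum ℝ H) := finite_real_spectrum.continuousOn f
  have hH : cfc (fun x : ℝ => x) H = H := cfc_id' ℝ H hHpsd.1.isSelfAdjoint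
  -- the Moore–Penrose inverse of `|X|`, since `(√0)⁻¹ = 0`
  set S := cfc (fun x : ℝ => (√x)⁻¹) H
  have hS : Sᴴ = S := IsSelfAdjoint.cfc
  refine ⟨S * Xᴴ, ?_, ?_⟩
  · calc S * Xᴴ * (S * Xᴴ)ᴴ * (S * Xᴴ) = S * H * S * S * Xᴴ := by
          simp only [conjTranspose_mul, conjTranspose_conjTranspose, hS, H, Matrix.mul_assoc]
      _ = S * Xᴴ := by
          rw [← hH, ← cfc_mul _ _ H (hc _) (hc _), ← cfc_mul _ _ H (hc _) (hc _),
            ← cfc_mul _ _ H (hc _) (hc _)]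
          congr 2
          funext x
          rw [← div_eq_inv_mul, Real.div_sqrt]
          rcases eq_or_ne (√x) 0 with h | h
          · simp [h]
          · rw [mul_inv_cancel₀ h, one_mul]
  · rw [matAbs, matSqrt_eq_cfc hHpsd, Matrix.mul_assoc]
    change S * H = cfc Real.sqrt H
    conv_lhs => rw [← hH, ← cfc_mul _ _ H (hc _) (hc _)]
    congr 1
    funext x
    rw [← div_eq_inv_mul, Real.div_sqrt]

lemma re_trace_matAbs_mul_le (F G : Matrix (Fin d) (Fin d) ℂ) :
    (matAbs (F * G)).trace.re ≤ √((F * Fᴴ).trace.re * (Gᴴ * G).trace.re) := by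
  obtain ⟨W, hW, hWX⟩ := exists_partialIsometry_mul_eq_matAbs (F * G)
  have hcs := re_trace_mul_conjTranspose_sq_le Gᴴ (W * F)
  rw [conjTranspose_conjTranspose, Matrix.mul_assoc, hWX] at hcs
  have hWF : RCLike.re (W * F * (W * F)ᴴ).trace ≤ RCLike.re (F * Fᴴ).trace := by
    rw [conjTranspose_mul, ← Matrix.mul_assoc, Matrix.mul_assoc W]
    exact (posSemidef_self_mul_conjTranspose F).re_trace_mul_mul_conjTranspose_le hW
  have hG : 0 ≤ RCLike.re (Gᴴ * G).trace :=
    (RCLike.nonneg_iff.mp (posSemidef_conjTranspose_mul_self G).trace_nonneg).1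
  rw [mul_comm]
  exact (le_abs_self _).trans (Real.abs_le_sqrt (hcs.trans (mul_le_mul_of_nonneg_left hWF hG)))

end

theorem trace_abs_sqrt_mul_sqrt_le_general
    (d : ℕ)
    (A B : Matrix (Fin d) (Fin d) ℂ) (hA : A.PosSemidef) (hB : B.PosSemidef) :
    ((matAbs (matSqrt A * matSqrt B)).trace).re ≤ Real.sqrt (A.trace.re * B.trace.re) := by
  have hA' : matSqrt A * (matSqrt A)ᴴ = A := by
    rw [(isHermitian_matSqrt A).eq, matSqrt_mul_self hA]
  have hB' : (matSqrt B)ᴴ * matSqrt B = B := by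
    rw [(isHermitian_matSqrt B).eq, matSqrt_mul_self hB]
  simpa only [hA', hB'] using re_trace_matAbs_mul_le (matSqrt A) (matSqrt B)

/-- for positive semidefinite matrices `A` and `B`,
`tr |A^{1/2} B^{1/2}| ≤ √(tr A · tr B)`. -/
theorem trace_abs_sqrt_mul_sqrt_le
    (d : ℕ) (hd : 1 ≤ d)
    (A B : Matrix (Fin d) (Fin d) ℂ) (hA : A.PosSemidef) (hB : B.PosSemidef) :
    ((matAbs (matSqrt A * matSqrt B)).trace).re ≤ Real.sqrt (A.trace.re * B.trace.re) :=
  trace_abs_sqrt_mul_sqrt_le_general d A B hA hB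
end
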